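/- arXiv:1611.08967 — 4 statements merged into one kernel-verified Lean document; each statement's English description precedes it below -/
import Mathlib

section
/- Let A be a real symmetric positive definite n×n matrix and let B be a real symmetric n×n matrix such that the spectral radius ρ_err := ρ(I − B·A) of the error propagation matrix I − B·A satisfies ρ_err < 1. Let u ∈ ℝⁿ be the exact solution of A·u = f, and let the iterates be defined by u^{(k+1)} = u^{(k)} + B·(f − A·u^{(k)}) for k ≥ 0 from an arbitrary initial guess u^{(0)}. Then for every k ≥ 0, ‖u − u^{(k+1)}‖_A ≤ (ρ_err / (1 − ρ_err)) · ‖u^{(k+1)} − u^{(k)}‖_A. -/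
/-!
The error `e k = u - uk k` satisfies `e (k + 1) = M e k` with `M = 1 - B A`, and `M` is
self-adjoint for the inner product `⟪v, w⟫ = A w ⬝ v` because `A` and `B` are symmetric.
Expanding in an orthonormal eigenbasis of `M` for this inner product gives
`‖M e‖_A ≤ ρ ‖e‖_A` with `ρ = ρ(M)`, so
`‖e (k + 1)‖_A ≤ ρ (‖e k - e (k + 1)‖_A + ‖e (k + 1)‖_A)`, which rearranges to the claim since
`e k - e (k + 1) = uk (k + 1) - uk k`.
-/

open Matrix

/-- The `A`-norm of a vector `v`: `‖v‖_A = √(A·v ⋅ v)`. -/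
noncomputable def ANorm {n : ℕ} (A : Matrix (Fin n) (Fin n) ℝ) (v : Fin n → ℝ) : ℝ :=
  Real.sqrt (A.mulVec v ⬝ᵥ v)

/-- The spectral radius of a square real matrix: the supremum of the absolute values
of its (real) eigenvalues. -/
noncomputable def specRadius {n : ℕ} (M : Matrix (Fin n) (Fin n) ℝ) : ℝ :=
  sSup {r : ℝ | ∃ μ : ℝ, Module.End.HasEigenvalue (Matrix.toLin' M) μ ∧ r = |μ|}

noncomputable def eigenvalueRadius {V : Type*} [AddCommGroup V] [Module ℝ V]
    (T : Module.End ℝ V) : ℝ :=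
  sSup {r : ℝ | ∃ μ : ℝ, T.HasEigenvalue μ ∧ r = |μ|}

section eigenvalueRadius

variable {V : Type*} [AddCommGroup V] [Module ℝ V] (T : Module.End ℝ V)

theorem eigenvalueRadius_nonneg : 0 ≤ eigenvalueRadius T :=
  Real.sSup_nonneg (by rintro _ ⟨μ, -, rfl⟩; exact abs_nonneg μ)

theorem abs_le_eigenvalueRadius [FiniteDimensional ℝ V] {μ : ℝ} (hμ : T.HasEigenvalue μ) :
    |μ| ≤ eigenvalueRadius T := by
  refine le_csSup ?_ ⟨μ, hμ, rfl⟩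
  refine ((T.finite_hasEigenvalue.image (|·|)).bddAbove).mono ?_
  rintro _ ⟨ν, hν, rfl⟩
  exact ⟨ν, hν, rfl⟩

end eigenvalueRadius

theorem LinearMap.IsSymmetric.norm_apply_le_eigenvalueRadius_mul {E : Type*}
    [NormedAddCommGroup E] [InnerProductSpace ℝ E] [FiniteDimensional ℝ E]
    {T : E →ₗ[ℝ] E} (hT : T.IsSymmetric) (x : E) :
    ‖T x‖ ≤ eigenvalueRadius T * ‖x‖ := by
  set b := hT.eigenvectorBasis rfl
  set ρ := eigenvalueRadius T
  have hρ : 0 ≤ ρ := eigenvalueRadius_nonneg T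
  refine (sq_le_sq₀ (norm_nonneg _) (by positivity)).1 ?_
  calc ‖T x‖ ^ 2 = ∑ i, (hT.eigenvalues rfl i * b.repr x i) ^ 2 := by
        rw [← b.repr.norm_map (T x), EuclideanSpace.real_norm_sq_eq]
        simp only [b, hT.eigenvectorBasis_apply_self_apply, RCLike.ofReal_real_eq_id, id_eq]
    _ ≤ ∑ i, ρ ^ 2 * b.repr x i ^ 2 := by
        gcongr with i
        rw [mul_pow, ← sq_abs (hT.eigenvalues rfl i)]
        gcongr
        exact abs_le_eigenvalueRadius T (hT.hasEigenvalue_eigenvalues rfl i)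
    _ = (ρ * ‖x‖) ^ 2 := by
        rw [← Finset.mul_sum, mul_pow, ← b.repr.norm_map x, EuclideanSpace.real_norm_sq_eq]

theorem norm_le_div_one_sub_mul_norm_sub {E : Type*} [SeminormedAddCommGroup E] {x y : E}
    {ρ : ℝ} (hρ₀ : 0 ≤ ρ) (hρ₁ : ρ < 1) (hy : ‖y‖ ≤ ρ * ‖x‖) :
    ‖y‖ ≤ ρ / (1 - ρ) * ‖x - y‖ := by
  have hx : ‖x‖ ≤ ‖x - y‖ + ‖y‖ := norm_le_norm_sub_add x y
  rw [div_mul_eq_mul_div, le_div_iff₀ (sub_pos.2 hρ₁)]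
  nlinarith [mul_le_mul_of_nonneg_left hx hρ₀]

namespace Matrix

theorem sub_add_mulVec_residual_eq {ι R : Type*} [Fintype ι] [DecidableEq ι] [Ring R]
    {A B : Matrix ι ι R} {f u x : ι → R} (hu : A *ᵥ u = f) :
    u - (x + B *ᵥ (f - A *ᵥ x)) = (1 - B * A) *ᵥ (u - x) := by
  rw [sub_mulVec, one_mulVec, ← mulVec_mulVec, mulVec_sub A, hu]
  abel

theorem IsSymm.transpose_one_sub_mul_mul {ι R : Type*} [Fintype ι] [DecidableEq ι] [CommRing R]
    {A B : Matrix ι ι R} (hA : A.IsSymm) (hB : B.IsSymm) :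
    (1 - B * A)ᵀ * A = A * (1 - B * A) := by
  rw [transpose_sub, transpose_one, transpose_mul, hA.eq, hB.eq]
  noncomm_ring

variable {n : ℕ} {A : Matrix (Fin n) (Fin n) ℝ}

theorem PosDef.ANorm_mulVec_le (hA : A.PosDef) {M : Matrix (Fin n) (Fin n) ℝ}
    (hMA : Mᵀ * A = A * M) (hρ : specRadius M < 1) (x : Fin n → ℝ) :
    ANorm A (M *ᵥ x) ≤ specRadius M / (1 - specRadius M) * ANorm A (x - M *ᵥ x) := by
  let := A.toNormedAddCommGroup hA
  let : SeminormedAddCommGroup (Fin n → ℝ) := NormedAddCommGroup.toSeminormedAddCommGroup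
  let : InnerProductSpace ℝ (Fin n → ℝ) := A.toInnerProductSpace hA.posSemidef
  have hM : (toLin' M).IsSymmetric := fun v w => by
    change A *ᵥ w ⬝ᵥ M *ᵥ v = A *ᵥ (M *ᵥ w) ⬝ᵥ v
    rw [dotProduct_comm, ← vecMul_transpose, ← dotProduct_mulVec, mulVec_mulVec, hMA,
      ← mulVec_mulVec, dotProduct_comm]
  -- For the `A`-inner product, `ANorm A = ‖·‖` and `specRadius M = eigenvalueRadius (toLin' M)`
  -- hold by definition.
  exact norm_le_div_one_sub_mul_norm_sub (eigenvalueRadius_nonneg _) hρ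
    (hM.norm_apply_le_eigenvalueRadius_mul x)

end Matrix

/-- If `A` is symmetric positive definite, `B` is symmetric, and the spectral radius
`ρ_err = ρ(I - B·A)` satisfies `ρ_err < 1`, then for the iteration
`u^{(k+1)} = u^{(k)} + B(f - A u^{(k)})` with exact solution `A u = f`, one has
`‖u - u^{(k+1)}‖_A ≤ ρ_err/(1-ρ_err) · ‖u^{(k+1)} - u^{(k)}‖_A` for every `k ≥ 0`. -/
theorem algebraic_error_upper_bound {n : ℕ} (A B : Matrix (Fin n) (Fin n) ℝ)
    (hA : A.PosDef) (hB : B.IsSymm)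
    (hρ : specRadius (1 - B * A) < 1)
    (f u : Fin n → ℝ) (hu : A.mulVec u = f)
    (uk : ℕ → Fin n → ℝ)
    (hiter : ∀ k : ℕ, uk (k + 1) = uk k + B.mulVec (f - A.mulVec (uk k)))
    (k : ℕ) :
    ANorm A (u - uk (k + 1)) ≤
      specRadius (1 - B * A) / (1 - specRadius (1 - B * A)) *
        ANorm A (uk (k + 1) - uk k) := by
  have hAsymm : A.IsSymm := (conjTranspose_eq_transpose_of_trivial A).symm.trans hA.isHermitian
  have herr : u - uk (k + 1) = (1 - B * A) *ᵥ (u - uk k) := by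
    rw [hiter k, sub_add_mulVec_residual_eq hu]
  have hstep : uk (k + 1) - uk k = (u - uk k) - (u - uk (k + 1)) := by abel
  rw [hstep, herr]
  exact hA.ANorm_mulVec_le (hAsymm.transpose_one_sub_mul_mul hB) hρ _
end

section
/- Let S be a real symmetric n×n matrix whose eigenvalues λ₁ ≥ λ₂ ≥ ⋯ ≥ λ_N (counted with multiplicity) satisfy 1 > λ₁ and λ_N > 0. Let r₀ ∈ ℝⁿ be a vector whose orthogonal projection onto the eigenspace of S for the largest eigenvalue λ₁ is nonzero, and set r_k := S^k·r₀. Then the residual ratio ρ^{(k)} := ‖r_k‖₂ / ‖r_{k−1}‖₂ converges to λ₁ as k → ∞. -/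
/-!
Expanding `r₀` in an orthonormal eigenbasis `uᵢ` of `S` with eigenvalues `μᵢ` gives
`‖Sᵏ r₀‖² = ∑ᵢ ⟨uᵢ, r₀⟩² (μᵢ²)ᵏ`. Since `0 < μᵢ ≤ λ₁`, dividing by `(λ₁²)ᵏ` leaves a sum
converging to `∑_{μᵢ = λ₁} ⟨uᵢ, r₀⟩²`, the squared norm of the projection of `r₀` onto the
top eigenspace, which is nonzero. So consecutive squared norms have ratio tending to `λ₁²`.
-/

open Matrix

/-- The Euclidean norm of a vector `v`: `‖v‖₂ = √(v ⋅ v)`. -/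
noncomputable def euclNorm {n : ℕ} (v : Fin n → ℝ) : ℝ :=
  Real.sqrt (v ⬝ᵥ v)

open Filter Topology

section PowerSums

variable {ι : Type*} [Fintype ι] {a q : ι → ℝ} {Q : ℝ}

theorem tendsto_sum_mul_div_pow (hQ : 0 < Q) (hq : ∀ i, q i = Q ∨ |q i| < Q) :
    Tendsto (fun k : ℕ => ∑ i, a i * (q i / Q) ^ k) atTop (𝓝 (∑ i with q i = Q, a i)) := by
  rw [Finset.sum_filter]
  refine tendsto_finsetSum _ fun i _ => ?_
  rcases hq i with h | h
  · simp [h, hQ.ne']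
  · have hlt : |q i / Q| < 1 := by rwa [abs_div, abs_of_pos hQ, div_lt_one hQ]
    simpa [((le_abs_self _).trans_lt h).ne] using
      (tendsto_pow_atTop_nhds_zero_of_abs_lt_one hlt).const_mul (a i)

theorem tendsto_sum_mul_pow_succ_div_sum_mul_pow (hQ : 0 < Q) (hq : ∀ i, q i = Q ∨ |q i| < Q)
    (hC : ∑ i with q i = Q, a i ≠ 0) :
    Tendsto (fun k : ℕ => (∑ i, a i * q i ^ (k + 1)) / ∑ i, a i * q i ^ k) atTop (𝓝 Q) := by
  set g : ℕ → ℝ := fun k => ∑ i, a i * (q i / Q) ^ k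
  have hfactor : ∀ k, ∑ i, a i * q i ^ k = Q ^ k * g k := fun k => by
    simp only [g, Finset.mul_sum, div_pow]
    refine Finset.sum_congr rfl fun i _ => ?_
    field_simp
  have hratio : ∀ k, (∑ i, a i * q i ^ (k + 1)) / ∑ i, a i * q i ^ k = Q * (g (k + 1) / g k) :=
    fun k => by
      rw [hfactor, hfactor, pow_succ', mul_assoc, mul_div_assoc,
        mul_div_mul_left _ _ (pow_ne_zero k hQ.ne')]
  have hg := tendsto_sum_mul_div_pow (a := a) hQ hq
  simpa [hratio, div_self hC] using
    (((hg.comp (tendsto_add_atTop_nat 1)).div hg hC).const_mul Q)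

end PowerSums

section Symmetric

variable {ι R : Type*} [Fintype ι]

theorem OrthonormalBasis.dotProduct_eq_sum (b : OrthonormalBasis ι ℝ (EuclideanSpace ℝ ι))
    (x y : ι → ℝ) : x ⬝ᵥ y = ∑ i, (⇑(b i) ⬝ᵥ x) * (⇑(b i) ⬝ᵥ y) := by
  have h := b.sum_inner_mul_inner (WithLp.toLp 2 x) (WithLp.toLp 2 y)
  simp only [EuclideanSpace.inner_eq_star_dotProduct, star_trivial] at h
  rw [dotProduct_comm, ← h]
  simp only [dotProduct_comm y]

theorem Matrix.IsSymm.dotProduct_mulVec_comm [CommSemiring R] {S : Matrix ι ι R} (hS : S.IsSymm)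
    (x y : ι → R) : x ⬝ᵥ (S *ᵥ y) = (S *ᵥ x) ⬝ᵥ y := by
  rw [dotProduct_mulVec, ← mulVec_transpose, hS.eq]

theorem Matrix.IsSymm.dotProduct_eq_zero_of_mulVec_eq_smul [CommRing R] [IsDomain R]
    {S : Matrix ι ι R} (hS : S.IsSymm) {u v : ι → R} {μ ν : R} (hu : S *ᵥ u = μ • u)
    (hv : S *ᵥ v = ν • v) (hne : μ ≠ ν) : u ⬝ᵥ v = 0 := by
  have h := hS.dotProduct_mulVec_comm u v
  rw [hu, hv, dotProduct_smul, smul_dotProduct, smul_eq_mul, smul_eq_mul] at h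
  exact (mul_eq_mul_right_iff.mp h.symm).resolve_left hne

variable [DecidableEq ι] [CommSemiring R] {S : Matrix ι ι R}

theorem Matrix.pow_mulVec_eq_smul_of_mulVec_eq_smul {u : ι → R} {μ : R} (hu : S *ᵥ u = μ • u)
    (k : ℕ) : (S ^ k) *ᵥ u = μ ^ k • u := by
  induction k with
  | zero => simp
  | succ k ih => rw [pow_succ', ← mulVec_mulVec, ih, mulVec_smul, hu, smul_smul, pow_succ]

theorem Matrix.IsSymm.dotProduct_pow_mulVec (hS : S.IsSymm) {u : ι → R} {μ : R}
    (hu : S *ᵥ u = μ • u) (k : ℕ) (x : ι → R) : u ⬝ᵥ ((S ^ k) *ᵥ x) = μ ^ k * (u ⬝ᵥ x) := by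
  rw [(hS.pow k).dotProduct_mulVec_comm, pow_mulVec_eq_smul_of_mulVec_eq_smul hu,
    smul_dotProduct, smul_eq_mul]

end Symmetric

namespace Matrix.IsHermitian

variable {ι : Type*} [Fintype ι] [DecidableEq ι] {S : Matrix ι ι ℝ} (hS : S.IsHermitian)

theorem hasEigenvalue_toLin'_eigenvalues (i : ι) :
    Module.End.HasEigenvalue (toLin' S) (hS.eigenvalues i) :=
  Module.End.hasEigenvalue_iff_mem_spectrum.mpr <| by
    rw [spectrum_toLin']
    exact hS.eigenvalues_mem_spectrum_real i

theorem pow_mulVec_dotProduct_self (x : ι → ℝ) (k : ℕ) :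
    (S ^ k *ᵥ x) ⬝ᵥ (S ^ k *ᵥ x) =
      ∑ i, (⇑(hS.eigenvectorBasis i) ⬝ᵥ x) ^ 2 * (hS.eigenvalues i ^ 2) ^ k := by
  rw [hS.eigenvectorBasis.dotProduct_eq_sum]
  refine Finset.sum_congr rfl fun i _ => ?_
  rw [(isHermitian_iff_isSymm.mp hS).dotProduct_pow_mulVec (hS.mulVec_eigenvectorBasis i)]
  ring

theorem exists_eigenvalues_eq_and_dotProduct_ne_zero {v x : ι → ℝ} {μ : ℝ}
    (hv : S *ᵥ v = μ • v) (hvx : v ⬝ᵥ x ≠ 0) :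
    ∃ i, hS.eigenvalues i = μ ∧ ⇑(hS.eigenvectorBasis i) ⬝ᵥ x ≠ 0 := by
  rw [hS.eigenvectorBasis.dotProduct_eq_sum] at hvx
  obtain ⟨i, -, hi⟩ := Finset.exists_ne_zero_of_sum_ne_zero hvx
  refine ⟨i, ?_, right_ne_zero_of_mul hi⟩
  by_contra hne
  exact left_ne_zero_of_mul hi <|
    (isHermitian_iff_isSymm.mp hS).dotProduct_eq_zero_of_mulVec_eq_smul
      (hS.mulVec_eigenvectorBasis i) hv hne

end Matrix.IsHermitian

theorem residual_ratio_tendsto_largest_eigenvalue_general {n : ℕ}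
    (S : Matrix (Fin n) (Fin n) ℝ) (hS : S.IsSymm)
    (lam1 : ℝ)
    (hmax : ∀ μ : ℝ, Module.End.HasEigenvalue (Matrix.toLin' S) μ → μ ≤ lam1)
    (heig : ∀ μ : ℝ, Module.End.HasEigenvalue (Matrix.toLin' S) μ → 0 < μ ∧ μ < 1)
    (r0 : Fin n → ℝ)
    (hproj : ∃ v : Fin n → ℝ,
      v ∈ Module.End.eigenspace (Matrix.toLin' S) lam1 ∧ v ⬝ᵥ r0 ≠ 0) :
    Filter.Tendsto
      (fun k : ℕ => euclNorm ((S ^ (k + 1)).mulVec r0) / euclNorm ((S ^ k).mulVec r0))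
      Filter.atTop (nhds lam1) := by
  have hH : S.IsHermitian := isHermitian_iff_isSymm.mpr hS
  set μ := hH.eigenvalues
  set c : Fin n → ℝ := fun i => ⇑(hH.eigenvectorBasis i) ⬝ᵥ r0
  obtain ⟨v, hv, hvr⟩ := hproj
  rw [Module.End.mem_eigenspace_iff, toLin'_apply] at hv
  obtain ⟨i₀, hi₀, hci₀⟩ := hH.exists_eigenvalues_eq_and_dotProduct_ne_zero hv hvr
  have hμ : ∀ i, 0 < μ i ∧ μ i ≤ lam1 := fun i =>
    ⟨(heig _ (hH.hasEigenvalue_toLin'_eigenvalues i)).1,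
      hmax _ (hH.hasEigenvalue_toLin'_eigenvalues i)⟩
  have hlam1 : 0 < lam1 := hi₀ ▸ (hμ i₀).1
  have hq : ∀ i, μ i ^ 2 = lam1 ^ 2 ∨ |μ i ^ 2| < lam1 ^ 2 := fun i => by
    rcases (hμ i).2.eq_or_lt with h | h
    · exact .inl (h ▸ rfl)
    · exact .inr (by rw [abs_sq]; exact pow_lt_pow_left₀ h (hμ i).1.le two_ne_zero)
  have hC : ∑ i with μ i ^ 2 = lam1 ^ 2, c i ^ 2 ≠ 0 :=
    (Finset.sum_pos' (fun i _ => sq_nonneg _)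
      ⟨i₀, Finset.mem_filter.mpr ⟨Finset.mem_univ _, congrArg (· ^ 2) hi₀⟩, by positivity⟩).ne'
  have hlim := (tendsto_sum_mul_pow_succ_div_sum_mul_pow (by positivity) hq hC).sqrt
  rw [Real.sqrt_sq hlam1.le] at hlim
  refine hlim.congr fun k => ?_
  rw [euclNorm, euclNorm, hH.pow_mulVec_dotProduct_self, hH.pow_mulVec_dotProduct_self,
    Real.sqrt_div' _ (Finset.sum_nonneg fun i _ => by positivity)]

/-- Let `S` be a real symmetric matrix all of whose eigenvalues lie in `(0,1)`, with
largest eigenvalue `λ₁`. If the orthogonal projection of `r₀` onto the eigenspace of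
`λ₁` is nonzero (i.e. some eigenvector for `λ₁` is not orthogonal to `r₀`), then the
residual ratios `‖S^k r₀‖₂ / ‖S^{k-1} r₀‖₂` converge to `λ₁` as `k → ∞`. -/
theorem residual_ratio_tendsto_largest_eigenvalue {n : ℕ}
    (S : Matrix (Fin n) (Fin n) ℝ) (hS : S.IsSymm)
    (lam1 : ℝ)
    (hlam1 : Module.End.HasEigenvalue (Matrix.toLin' S) lam1)
    (hmax : ∀ μ : ℝ, Module.End.HasEigenvalue (Matrix.toLin' S) μ → μ ≤ lam1)
    (heig : ∀ μ : ℝ, Module.End.HasEigenvalue (Matrix.toLin' S) μ → 0 < μ ∧ μ < 1)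
    (r0 : Fin n → ℝ)
    (hproj : ∃ v : Fin n → ℝ,
      v ∈ Module.End.eigenspace (Matrix.toLin' S) lam1 ∧ v ⬝ᵥ r0 ≠ 0) :
    Filter.Tendsto
      (fun k : ℕ => euclNorm ((S ^ (k + 1)).mulVec r0) / euclNorm ((S ^ k).mulVec r0))
      Filter.atTop (nhds lam1) :=
  residual_ratio_tendsto_largest_eigenvalue_general S hS lam1 hmax heig r0 hproj
end

section
/- Let λ ∈ (0,1), γ ∈ (0,1), and b ≥ 0, and define p(k) := λ·(1 + b·γ^{k+1})/(1 + b·γ^k) for integers k ≥ 1. Then p(k) < 1 for all k, and there exists N ∈ ℕ such that for all k ≥ N, λ/(1 − λ) ≤ e^{1/k} · p(k)/(1 − p(k)). -/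
/-- With `λ, γ ∈ (0,1)` and `b ≥ 0`, the model rate `p(k) = λ(1 + bγ^{k+1})/(1 + bγ^k)`
satisfies `p(k) < 1` for all `k ≥ 1`, and there is `N` such that for all `k ≥ N` (k ≥ 1),
`λ/(1-λ) ≤ e^{1/k}·p(k)/(1-p(k))`. -/
theorem model_rate_estimator_reliable (lam γ b : ℝ)
    (hlam : lam ∈ Set.Ioo (0 : ℝ) 1) (hγ : γ ∈ Set.Ioo (0 : ℝ) 1) (hb : 0 ≤ b) :
    (∀ k : ℕ, 1 ≤ k → lam * (1 + b * γ ^ (k + 1)) / (1 + b * γ ^ k) < 1) ∧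
    ∃ N : ℕ, ∀ k : ℕ, N ≤ k → 1 ≤ k →
      lam / (1 - lam) ≤
        Real.exp (1 / (k : ℝ)) *
          ((lam * (1 + b * γ ^ (k + 1)) / (1 + b * γ ^ k)) /
            (1 - lam * (1 + b * γ ^ (k + 1)) / (1 + b * γ ^ k))) := by
  obtain ⟨hl0, hl1⟩ := hlam
  obtain ⟨hg0, hg1⟩ := hγ
  have hgpow : ∀ k : ℕ, 0 < γ ^ k := fun k => pow_pos hg0 k
  have hplt : ∀ k : ℕ, 1 ≤ k → lam * (1 + b * γ ^ (k + 1)) / (1 + b * γ ^ k) < 1 := by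
    intro k hk
    have hD : (0:ℝ) < 1 + b * γ ^ k := by positivity
    rw [div_lt_one hD]
    have h1 : γ ^ (k + 1) ≤ γ ^ k := by
      rw [pow_succ]
      nlinarith [hgpow k]
    nlinarith [hgpow (k + 1), mul_nonneg hb (hgpow (k+1)).le]
  refine ⟨hplt, ?_⟩
  have htend : Filter.Tendsto (fun k : ℕ => (k : ℝ) * γ ^ k * (b * (1 - lam * γ)))
      Filter.atTop (nhds 0) := by
    simpa using (tendsto_self_mul_const_pow_of_lt_one hg0.le hg1).mul_const (b * (1 - lam * γ))
  have hev : ∀ᶠ k : ℕ in Filter.atTop,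
      (k : ℝ) * γ ^ k * (b * (1 - lam * γ)) < 1 - lam := by
    have := htend.eventually (gt_mem_nhds (by linarith : (0:ℝ) < 1 - lam))
    simpa using this
  obtain ⟨N, hN⟩ := Filter.eventually_atTop.mp hev
  refine ⟨N, fun k hkN hk1 => ?_⟩
  have hkpos : (0:ℝ) < (k:ℝ) := by exact_mod_cast hk1
  set x : ℝ := b * γ ^ k with hx
  have hx0 : 0 ≤ x := mul_nonneg hb (hgpow k).le
  have hkey : (k:ℝ) * x * (1 - lam * γ) ≤ 1 - lam := by
    have h := hN k hkN
    rw [hx]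
    nlinarith [h]
  have hγx : 0 ≤ γ * x := mul_nonneg hg0.le hx0
  have hD : (0:ℝ) < 1 + x := by linarith
  have hNum : lam * (1 + b * γ ^ (k + 1)) = lam * (1 + γ * x) := by
    rw [hx, pow_succ]; ring
  have hNum0 : 0 < lam * (1 + γ * x) := by nlinarith
  have hp1 : lam * (1 + b * γ ^ (k + 1)) / (1 + b * γ ^ k) = lam * (1 + γ * x) / (1 + x) := by
    rw [hNum, hx]
  rw [hp1]
  have hlg : (0:ℝ) < 1 - lam * γ := by nlinarith
  have h1p : 1 - lam * (1 + γ * x) / (1 + x) = ((1 - lam) + (1 - lam * γ) * x) / (1 + x) := by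
    field_simp
    ring
  rw [h1p]
  have hQ : (0:ℝ) < (1 - lam) + (1 - lam * γ) * x := by nlinarith [mul_nonneg hlg.le hx0]
  have hdiv : lam * (1 + γ * x) / (1 + x) / (((1 - lam) + (1 - lam * γ) * x) / (1 + x))
      = lam * (1 + γ * x) / ((1 - lam) + (1 - lam * γ) * x) := by
    field_simp
  rw [hdiv, ← mul_div_assoc, div_le_div_iff₀ (by linarith : (0:ℝ) < 1 - lam) hQ]
  have hE : 1 + 1 / (k:ℝ) ≤ Real.exp (1 / (k:ℝ)) := by
    have := Real.add_one_le_exp (1 / (k:ℝ))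
    linarith
  have hdivk : x * (1 - lam * γ) ≤ (1 - lam) / (k:ℝ) := by
    rw [le_div_iff₀ hkpos]
    nlinarith [hkey]
  have hA : (0:ℝ) < (1 + γ * x) * (1 - lam) := by nlinarith
  have step1 : (1 + 1 / (k:ℝ)) * ((1 + γ * x) * (1 - lam))
      ≤ Real.exp (1 / (k:ℝ)) * ((1 + γ * x) * (1 - lam)) :=
    mul_le_mul_of_nonneg_right hE hA.le
  have hk' : (1 - lam) / (k:ℝ) = (1 / (k:ℝ)) * (1 - lam) := by ring
  have hpos2 : 0 ≤ (1 / (k:ℝ)) * (γ * x) * (1 - lam) :=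
    mul_nonneg (mul_nonneg (by positivity) hγx) (by linarith)
  have key : (1 - lam) + (1 - lam * γ) * x
      ≤ Real.exp (1 / (k:ℝ)) * ((1 + γ * x) * (1 - lam)) := by
    have hpos3 : 0 ≤ γ * x * (1 - lam) := mul_nonneg hγx (by linarith)
    rw [hk'] at hdivk
    linarith [step1, hdivk, hpos2, hpos3]
  calc lam * ((1 - lam) + (1 - lam * γ) * x)
      ≤ lam * (Real.exp (1 / (k:ℝ)) * ((1 + γ * x) * (1 - lam))) :=
        mul_le_mul_of_nonneg_left key hl0.le
    _ = Real.exp (1 / (k:ℝ)) * (lam * (1 + γ * x)) * (1 - lam) := by ring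
end

section
/- Let λ ∈ (0,1), γ ∈ (0,1), and b ≥ 0, and define for real t > 0 the functions p(t) := λ·(1 + b·γ^{t+1})/(1 + b·γ^t) and g(t) := e^{1/t} · p(t)/(1 − p(t)). Then there exists T > 0 such that g is strictly decreasing (equivalently, its derivative is negative) on [T, ∞), and g(t) converges to λ/(1 − λ) as t → ∞. -/
/-!
Writing `A = bγ` and `B = b(1 - λγ)/(1 - λ)`, the odds are
`p(t)/(1 - p(t)) = λ/(1-λ) · (1 + Aγ^t)/(1 + Bγ^t)` with `0 ≤ A ≤ B`, so
`g = λ/(1-λ) · exp h` for `h(t) = 1/t + log(1 + Aγ^t) - log(1 + Bγ^t)`.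
The logarithmic correction increases with `t`, but its derivative is at most
`-log γ · (B - A) · γ^t`, which decays exponentially and is therefore eventually beaten by the
`-1/t²` coming from `1/t`.
-/

open Filter Real Set Topology

lemma odds_eq_mul_div {lam γ b x : ℝ} (hlam : lam < 1) (hlamγ : lam * γ < 1) (hb : 0 ≤ b)
    (hx : 0 ≤ x) :
    lam * (1 + b * (x * γ)) / (1 + b * x) / (1 - lam * (1 + b * (x * γ)) / (1 + b * x)) =
      lam / (1 - lam) * ((1 + b * γ * x) / (1 + b * (1 - lam * γ) / (1 - lam) * x)) := by
  have h1lam : 0 < 1 - lam := by linarith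
  have h1lamγ : 0 < 1 - lam * γ := by linarith
  have hbx : 0 < 1 + b * x := by positivity
  have hBx : 0 < 1 + b * (1 - lam * γ) / (1 - lam) * x := by positivity
  have hden : 1 - lam * (1 + b * (x * γ)) / (1 + b * x) =
      (1 - lam) * (1 + b * (1 - lam * γ) / (1 - lam) * x) / (1 + b * x) := by
    field_simp
    ring
  rw [hden]
  field_simp

lemma sub_mul_le_div_one_add_mul_sub {A B x : ℝ} (hA : 0 ≤ A) (hAB : A ≤ B) (hx : 0 ≤ x) :
    (A - B) * x ≤ A * x / (1 + A * x) - B * x / (1 + B * x) := by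
  have hAx : 0 ≤ A * x := by positivity
  have hBx : 0 ≤ B * x := mul_nonneg (hA.trans hAB) hx
  rw [div_sub_div _ _ (by positivity) (by positivity), le_div_iff₀ (by positivity)]
  nlinarith [mul_nonneg (mul_nonneg (sub_nonneg.2 hAB) hx) (add_nonneg hAx (add_nonneg hBx
    (mul_nonneg hAx hBx)))]

lemma hasDerivAt_log_one_add_mul_rpow {A γ : ℝ} (hA : 0 ≤ A) (hγ : 0 < γ) (t : ℝ) :
    HasDerivAt (fun s => log (1 + A * γ ^ s)) (log γ * (A * γ ^ t / (1 + A * γ ^ t))) t := by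
  have hpos : 0 < 1 + A * γ ^ t := by positivity
  exact ((((hasStrictDerivAt_const_rpow hγ t).hasDerivAt.const_mul A).const_add 1).log
    hpos.ne').congr_deriv (by ring)

lemma eventually_mul_rpow_lt_inv_sq {γ : ℝ} (hγ0 : 0 < γ) (hγ1 : γ < 1) (C : ℝ) :
    ∀ᶠ t in atTop, C * γ ^ t < (t ^ 2)⁻¹ := by
  have hdecay : Tendsto (fun t : ℝ => C * (t ^ 2 * γ ^ t)) atTop (𝓝 0) := by
    simpa only [neg_neg, ← rpow_def_of_pos hγ0, rpow_two, mul_zero] using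
      (tendsto_rpow_mul_exp_neg_mul_atTop_nhds_zero 2 _ (neg_pos.2 (log_neg hγ0 hγ1))).const_mul C
  filter_upwards [hdecay.eventually_lt_const one_pos, eventually_gt_atTop 0] with t hsmall ht
  rw [← one_div, lt_div_iff₀ (by positivity)]
  linarith

section Exponent

variable {A B γ : ℝ}

lemma hasDerivAt_inv_add_log_sub_log (hA : 0 ≤ A) (hB : 0 ≤ B) (hγ : 0 < γ) {t : ℝ}
    (ht : t ≠ 0) :
    HasDerivAt (fun s => 1 / s + log (1 + A * γ ^ s) - log (1 + B * γ ^ s))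
      (-(t ^ 2)⁻¹ + log γ * (A * γ ^ t / (1 + A * γ ^ t) - B * γ ^ t / (1 + B * γ ^ t))) t := by
  have hinv : HasDerivAt (fun s : ℝ => 1 / s) (-(t ^ 2)⁻¹) t := by
    simpa only [one_div] using hasDerivAt_inv ht
  exact ((hinv.add (hasDerivAt_log_one_add_mul_rpow hA hγ t)).sub
    (hasDerivAt_log_one_add_mul_rpow hB hγ t)).congr_deriv (by ring)

theorem exists_strictAntiOn_inv_add_log_sub_log (hA : 0 ≤ A) (hAB : A ≤ B) (hγ0 : 0 < γ)
    (hγ1 : γ < 1) :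
    ∃ T, 0 < T ∧
      StrictAntiOn (fun t => 1 / t + log (1 + A * γ ^ t) - log (1 + B * γ ^ t)) (Ici T) := by
  have hB : 0 ≤ B := hA.trans hAB
  obtain ⟨T₀, hT₀⟩ :=
    eventually_atTop.1 (eventually_mul_rpow_lt_inv_sq hγ0 hγ1 (log γ * (A - B)))
  have hderiv : ∀ t ∈ Ici (max T₀ 1), HasDerivAt _ _ t := fun t ht =>
    hasDerivAt_inv_add_log_sub_log hA hB hγ0
      (lt_of_lt_of_le one_pos ((le_max_right _ _).trans ht)).ne'
  refine ⟨max T₀ 1, lt_max_of_lt_right one_pos, strictAntiOn_of_hasDerivWithinAt_neg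
    (convex_Ici _) (fun t ht => (hderiv t ht).continuousAt.continuousWithinAt)
    (fun t ht => (hderiv t (interior_subset ht)).hasDerivWithinAt) fun t ht => ?_⟩
  rw [interior_Ici] at ht
  have hcorr : log γ * (A * γ ^ t / (1 + A * γ ^ t) - B * γ ^ t / (1 + B * γ ^ t)) ≤
      log γ * (A - B) * γ ^ t := by
    rw [mul_assoc]
    exact mul_le_mul_of_nonpos_left (sub_mul_le_div_one_add_mul_sub hA hAB (by positivity))
      (log_neg hγ0 hγ1).le
  linarith [hT₀ t ((le_max_left _ _).trans ht.le)]

lemma tendsto_inv_add_log_sub_log (hγ0 : 0 < γ) (hγ1 : γ < 1) :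
    Tendsto (fun t => 1 / t + log (1 + A * γ ^ t) - log (1 + B * γ ^ t)) atTop (𝓝 0) := by
  have hpow : Tendsto (fun t : ℝ => γ ^ t) atTop (𝓝 0) := tendsto_rpow_atTop_of_base_lt_one γ
    (by linarith) hγ1
  have hlog (C : ℝ) : Tendsto (fun t : ℝ => log (1 + C * γ ^ t)) atTop (𝓝 0) := by
    simpa using ((hpow.const_mul C).const_add 1).log (by simp)
  have hinv : Tendsto (fun t : ℝ => 1 / t) atTop (𝓝 0) := tendsto_const_nhds.div_atTop tendsto_id
  simpa using (hinv.add (hlog A)).sub (hlog B)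

end Exponent

/-- With `λ, γ ∈ (0,1)`, `b ≥ 0`, `p(t) = λ(1 + bγ^{t+1})/(1 + bγ^t)` and
`g(t) = e^{1/t}·p(t)/(1 - p(t))` (real powers), there is `T > 0` such that `g` is
strictly decreasing on `[T, ∞)` and `g(t) → λ/(1-λ)` as `t → ∞`. -/
theorem estimator_factor_eventually_decreasing (lam γ b : ℝ)
    (hlam : lam ∈ Set.Ioo (0 : ℝ) 1) (hγ : γ ∈ Set.Ioo (0 : ℝ) 1) (hb : 0 ≤ b)
    (p g : ℝ → ℝ)
    (hp : ∀ t : ℝ, p t = lam * (1 + b * γ ^ (t + 1)) / (1 + b * γ ^ t))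
    (hg : ∀ t : ℝ, g t = Real.exp (1 / t) * p t / (1 - p t)) :
    ∃ T : ℝ, 0 < T ∧ StrictAntiOn g (Set.Ici T) ∧
      Filter.Tendsto g Filter.atTop (nhds (lam / (1 - lam))) := by
  obtain ⟨hlam0, hlam1⟩ := hlam
  obtain ⟨hγ0, hγ1⟩ := hγ
  set A := b * γ
  set B := b * (1 - lam * γ) / (1 - lam)
  have hlamγ : lam * γ < 1 := by nlinarith
  have hAB : A ≤ B := by
    rw [le_div_iff₀ (by linarith)]
    nlinarith [mul_nonneg hb hγ0.le]
  have hg_eq : g = fun t => lam / (1 - lam) *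
      exp (1 / t + log (1 + A * γ ^ t) - log (1 + B * γ ^ t)) := by
    funext t
    have hx : 0 < γ ^ t := rpow_pos_of_pos hγ0 t
    rw [hg, mul_div_assoc, hp, rpow_add_one hγ0.ne', odds_eq_mul_div hlam1 hlamγ hb hx.le,
      exp_sub, exp_add, exp_log (by positivity), exp_log (by positivity)]
    ring
  obtain ⟨T, hT, hanti⟩ := exists_strictAntiOn_inv_add_log_sub_log (by positivity) hAB hγ0 hγ1
  refine ⟨T, hT, hg_eq ▸ fun s hs t ht hst =>
    mul_lt_mul_of_pos_left (exp_lt_exp.2 (hanti hs ht hst)) (by bound), ?_⟩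
  rw [hg_eq]
  simpa using ((continuous_exp.tendsto 0).comp (tendsto_inv_add_log_sub_log (A := A) (B := B)
    hγ0 hγ1)).const_mul (lam / (1 - lam))
end
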